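/- arXiv:1412.3054 — 9 statements merged into one kernel-verified Lean document; each statement's English description precedes it below -/
import Mathlib

section
/- Let n > 1 be an integer and r a positive integer. There exist r elements x_1, ..., x_r of ℤ/nℤ with x_i - x_j a unit for all i ≠ j if and only if every prime divisor of n is at least r. -/
theorem exists_pairwise_unit_diff_iff (n r : ℕ) (hn : 1 < n) (hr : 0 < r) :
    (∃ x : Fin r → ZMod n, ∀ i j, i ≠ j → IsUnit (x i - x j)) ↔
      ∀ p : ℕ, p.Prime → p ∣ n → r ≤ p := by
  constructor
  · rintro ⟨x, hx⟩ p hp hpn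
    haveI : Fact p.Prime := ⟨hp⟩
    have hinj : Function.Injective (fun i => ZMod.castHom hpn (ZMod p) (x i)) := by
      intro i j hij
      by_contra hne
      have hu := (hx i j hne).map (ZMod.castHom hpn (ZMod p))
      rw [map_sub] at hu
      simp only at hij
      rw [hij, sub_self] at hu
      exact hu.ne_zero rfl
    calc r = Fintype.card (Fin r) := (Fintype.card_fin r).symm
      _ ≤ Fintype.card (ZMod p) := Fintype.card_le_of_injective _ hinj
      _ = p := ZMod.card p
  · intro h
    refine ⟨fun i => ((i : ℕ) : ZMod n), ?_⟩
    have key : ∀ i j : Fin r, (j : ℕ) < (i : ℕ) →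
        IsUnit (((i : ℕ) : ZMod n) - ((j : ℕ) : ZMod n)) := by
      intro i j hij
      have hd : ((i : ℕ) : ZMod n) - ((j : ℕ) : ZMod n) = (((i : ℕ) - (j : ℕ) : ℕ) : ZMod n) := by
        push_cast [Nat.cast_sub hij.le]
        ring
      rw [hd, ZMod.isUnit_iff_coprime]
      set d := (i : ℕ) - (j : ℕ) with hdef
      have hdpos : 0 < d := Nat.sub_pos_of_lt hij
      have hdlt : d < r := lt_of_le_of_lt (Nat.sub_le _ _) i.isLt
      by_contra hnc
      have hg : 1 < Nat.gcd d n := by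
        rcases Nat.lt_or_ge (Nat.gcd d n) 2 with h2 | h2
        · interval_cases hG : Nat.gcd d n
          · exact absurd (Nat.eq_zero_of_gcd_eq_zero_left hG) hdpos.ne'
          · exact absurd hG hnc
        · omega
      set q := (Nat.gcd d n).minFac with hq
      have hqp : q.Prime := Nat.minFac_prime (by omega)
      have hqd : q ∣ d := (Nat.minFac_dvd _).trans (Nat.gcd_dvd_left _ _)
      have hqn : q ∣ n := (Nat.minFac_dvd _).trans (Nat.gcd_dvd_right _ _)
      have := h q hqp hqn
      have := Nat.le_of_dvd hdpos hqd
      omega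
    intro i j hij
    rcases Nat.lt_or_ge (j : ℕ) (i : ℕ) with hlt | hge
    · exact key i j hlt
    · have : (i : ℕ) < (j : ℕ) := lt_of_le_of_ne hge (by simpa [Fin.ext_iff] using hij)
      simpa using (key j i this).neg
end

section
/- Let n > 1 be an integer and r a positive integer such that every prime factor of n is at least r. If x_1, ..., x_r ∈ ℤ/nℤ satisfy that x_i - x_j is a unit for all i ≠ j, then the number of elements w ∈ ℤ/nℤ such that w - x_i is a unit for all i ∈ {1,...,r} equals S_r(n) = ∏_{p^α ∥ n} p^(α-1)(p - r). -/
/-!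
By the Chinese remainder theorem `ZMod n ≃+* Π p, ZMod (p ^ αₚ)`, and an element of a product ring
is a unit iff all its components are, so the count is multiplicative over the prime powers.
In `ZMod (p ^ α)` an element is a unit iff its residue mod `p` is nonzero. The pairwise unit
differences make the residues of the `xᵢ` distinct, so `w` qualifies iff its residue avoids `r`
given residues; each of the `p - r` admissible residues has a fibre of size `p ^ (α - 1)`.
-/

open Finset

namespace AddMonoidHomClass

variable {F G H : Type*} [AddGroup G] [Fintype G] [AddGroup H] [Fintype H] [DecidableEq H]
  [FunLike F G H] [AddMonoidHomClass F G H]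

theorem card_fiber_mul_card (f : F) (hf : Function.Surjective f) (t : H) :
    #{g | f g = t} * Fintype.card H = Fintype.card G := by
  calc #{g | f g = t} * Fintype.card H
      = ∑ s : H, #{g | f g = s} := by
        rw [sum_congr rfl fun s _ => AddMonoidHom.card_fiber_eq_of_mem_range f (hf s) (hf t),
          sum_const, card_univ, smul_eq_mul, mul_comm]
    _ = Fintype.card G := (card_eq_sum_card_fiberwise fun g _ => mem_univ (f g)).symm

theorem card_preimage_mul_card (f : F) (hf : Function.Surjective f) (T : Finset H) :
    #{g | f g ∈ T} * Fintype.card H = #T * Fintype.card G := by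
  rw [card_eq_sum_card_fiberwise (s := {g | f g ∈ T}) (t := T) fun g hg => (mem_filter.mp hg).2,
    sum_mul]
  calc ∑ t ∈ T, #{g ∈ univ.filter (f · ∈ T) | f g = t} * Fintype.card H
      = ∑ t ∈ T, Fintype.card G := by
        refine sum_congr rfl fun t ht => ?_
        rw [filter_filter, ← card_fiber_mul_card f hf t]
        congr 2
        ext g
        simp only [mem_filter, mem_univ, true_and, and_iff_right_iff_imp]
        rintro rfl
        exact ht
    _ = #T * Fintype.card G := by rw [sum_const, smul_eq_mul]

end AddMonoidHomClass

section UnitDifferences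

variable {ι : Type*}

theorem RingEquiv.card_forall_isUnit_sub {R S : Type*} [Ring R] [Ring S] (e : R ≃+* S)
    (x : ι → R) :
    Nat.card {w : R // ∀ i, IsUnit (w - x i)} = Nat.card {w : S // ∀ i, IsUnit (w - e (x i))} :=
  Nat.card_congr <| e.toEquiv.subtypeEquiv fun w => by
    simp only [RingEquiv.toEquiv_eq_coe, EquivLike.coe_coe, ← map_sub, isUnit_map_iff]

theorem Pi.card_forall_isUnit_sub {κ : Type*} [Fintype κ] {R : κ → Type*} [∀ k, Ring (R k)]
    (x : ι → Π k, R k) :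
    Nat.card {w : Π k, R k // ∀ i, IsUnit (w - x i)} =
      ∏ k, Nat.card {w : R k // ∀ i, IsUnit (w - x i k)} := by
  have hiff (w : Π k, R k) : (∀ i, IsUnit (w - x i)) ↔ ∀ k i, IsUnit (w k - x i k) := by
    simp only [Pi.isUnit_iff, Pi.sub_apply]
    exact forall_comm
  rw [← Nat.card_pi, Nat.card_congr ((Equiv.subtypeEquivRight hiff).trans
    (Equiv.subtypePiEquivPi (p := fun k v => ∀ i, IsUnit (v - x i k))))]

theorem card_forall_isUnit_sub_mul_card [Fintype ι] {R K : Type*} [Ring R] [Fintype R] [Ring K]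
    [Fintype K] (f : R →+* K) (hf : Function.Surjective f) (hunit : ∀ z, IsUnit z ↔ f z ≠ 0)
    (x : ι → R) (hx : ∀ i j, i ≠ j → IsUnit (x i - x j)) :
    Nat.card {w : R // ∀ i, IsUnit (w - x i)} * Fintype.card K =
      (Fintype.card K - Fintype.card ι) * Fintype.card R := by
  classical
  have hinj : Function.Injective (f ∘ x) := by
    intro i j hij
    by_contra hne
    exact (hunit _).mp (hx i j hne) (by simpa [sub_eq_zero] using hij)
  have hiff (w : R) : (∀ i, IsUnit (w - x i)) ↔ f w ∈ (univ.image (f ∘ x))ᶜ := by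
    simp only [hunit, map_sub, ne_eq, sub_eq_zero, mem_compl, mem_image, mem_univ, true_and,
      Function.comp_apply, not_exists]
    exact forall_congr' fun i => ne_comm
  rw [Nat.card_eq_fintype_card, Fintype.card_subtype, filter_congr fun w _ => hiff w,
    AddMonoidHomClass.card_preimage_mul_card f hf, card_compl, card_image_of_injective _ hinj,
    card_univ]

end UnitDifferences

namespace ZMod

theorem isUnit_iff_castHom_ne_zero {p α : ℕ} (hp : p.Prime) (hα : α ≠ 0) (z : ZMod (p ^ α)) :
    IsUnit z ↔ castHom (dvd_pow_self p hα) (ZMod p) z ≠ 0 := by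
  have : NeZero (p ^ α) := ⟨pow_ne_zero _ hp.ne_zero⟩
  rw [← natCast_zmod_val z, map_natCast, isUnit_natCast_iff_not_dvd_pow hp (Nat.pos_of_ne_zero hα),
    Ne, natCast_eq_zero_iff]

theorem card_forall_isUnit_sub_prime_pow {p α r : ℕ} (hp : p.Prime) (hα : α ≠ 0)
    (x : Fin r → ZMod (p ^ α)) (hx : ∀ i j, i ≠ j → IsUnit (x i - x j)) :
    Nat.card {w : ZMod (p ^ α) // ∀ i, IsUnit (w - x i)} = p ^ (α - 1) * (p - r) := by
  have : NeZero p := ⟨hp.ne_zero⟩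
  have : NeZero (p ^ α) := ⟨pow_ne_zero _ hp.ne_zero⟩
  have hcount := card_forall_isUnit_sub_mul_card _ (castHom_surjective (dvd_pow_self p hα))
    (isUnit_iff_castHom_ne_zero hp hα) x hx
  rw [card, card, Fintype.card_fin] at hcount
  exact Nat.eq_of_mul_eq_mul_right hp.pos (by rw [hcount, ← pow_sub_one_mul hα]; ring)

end ZMod

theorem card_common_unit_diff_general (n r : ℕ) (hn : 1 < n)
    (x : Fin r → ZMod n) (hx : ∀ i j, i ≠ j → IsUnit (x i - x j)) :
    Nat.card {w : ZMod n // ∀ i, IsUnit (w - x i)} =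
      ∏ p ∈ n.primeFactors, p ^ (n.factorization p - 1) * (p - r) := by
  have hn0 : n ≠ 0 := by omega
  set e := ZMod.equivPi n hn0
  rw [e.card_forall_isUnit_sub, Pi.card_forall_isUnit_sub, ← prod_coe_sort n.primeFactors]
  refine prod_congr rfl fun (p : n.primeFactors) _ => ZMod.card_forall_isUnit_sub_prime_pow
    (Nat.prime_of_mem_primeFactors p.2)
    (Finsupp.mem_support_iff.mp (p.2 : (p : ℕ) ∈ n.factorization.support)) _ fun i j hij => ?_
  simpa only [map_sub, Pi.sub_apply] using Pi.isUnit_iff.mp ((hx i j hij).map e) p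

theorem card_common_unit_diff (n r : ℕ) (hn : 1 < n) (hr : 0 < r)
    (hmin : ∀ p : ℕ, p.Prime → p ∣ n → r ≤ p)
    (x : Fin r → ZMod n) (hx : ∀ i j, i ≠ j → IsUnit (x i - x j)) :
    Nat.card {w : ZMod n // ∀ i, IsUnit (w - x i)} =
      ∏ p ∈ n.primeFactors, p ^ (n.factorization p - 1) * (p - r) :=
  card_common_unit_diff_general n r hn x hx
end

section
/- For positive integers m and n with n > 1, the number of cliques of order m in the unitary Cayley graph G_{ℤ/nℤ} equals ∏_{k=1}^{m} S_{k-1}(n)/k, where S_0(n) = n and S_r(n) = ∏_{p^α ∥ n} p^(α-1)(p - r) for r ≥ 1 (with the convention that a factor is 0 when p < r... i.e., the product is 0 if some prime factor of n is less than r). -/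
open Finset

/-- The unitary Cayley graph of a commutative ring: `a` is adjacent to `b`
iff `a ≠ b` and `a - b` is a unit. -/
def unitaryCayley (X : Type*) [CommRing X] : SimpleGraph X where
  Adj a b := a ≠ b ∧ IsUnit (a - b)
  symm := by
    constructor
    rintro a b ⟨h1, h2⟩
    exact ⟨h1.symm, neg_sub a b ▸ h2.neg⟩
  loopless := by constructor; rintro a ⟨h, _⟩; exact h rfl

/-- The Schemmel totient function, with the convention `S 0 n = n`. -/
noncomputable def S (r n : ℕ) : ℕ :=
  if r = 0 then n else ∏ p ∈ n.primeFactors, p ^ (n.factorization p - 1) * (p - r)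

/-!
An `m`-clique of `unitaryCayley (ZMod n)` with an ordering of its vertices is the same as an
`m`-tuple whose entries pairwise differ by units, so it suffices to count such tuples. Their number
is multiplicative in `n` by the Chinese remainder theorem. For `n = p ^ e`, an element is a unit
iff its reduction mod `p` is nonzero, so a tuple is admissible iff its reductions mod `p` are
distinct: there are `p (p - 1) ⋯ (p - m + 1)` choices of reductions and `p ^ (e - 1)` lifts of
each entry, giving `∏_{k < m} p ^ (e - 1) (p - k)`, the local factor of `∏_{k < m} S k n`.
-/

open Function
open scoped Nat

theorem card_injective_comp_of_card_fiber {ι α β : Type*} [Fintype ι] [Finite α] [Finite β]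
    (π : α → β) {c : ℕ} (hc : ∀ b, Nat.card (π ⁻¹' {b}) = c) :
    Nat.card {f : ι → α // Injective (π ∘ f)} =
      (Nat.card β).descFactorial (Fintype.card ι) * c ^ Fintype.card ι := by
  classical
  have : Fintype β := Fintype.ofFinite β
  let F (f : {f : ι → α // Injective (π ∘ f)}) : ι ↪ β := ⟨π ∘ f, f.2⟩
  have fiber (g : ι ↪ β) : {f // F f = g} ≃ ∀ i, π ⁻¹' {g i} :=
    { toFun := fun f i => ⟨f.1.1 i, DFunLike.congr_fun f.2 i⟩
      invFun := fun h => ⟨⟨fun i => h i, by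
          convert g.injective using 1; exact funext fun i => (h i).2⟩,
        DFunLike.ext _ _ fun i => (h i).2⟩
      left_inv := fun f => rfl
      right_inv := fun h => rfl }
  rw [← Nat.card_congr (Equiv.sigmaFiberEquiv F), Nat.card_sigma]
  simp_rw [Nat.card_congr (fiber _), Nat.card_pi, hc]
  simp [Nat.card_eq_fintype_card, Fintype.card_embedding_eq]

theorem AddMonoidHom.card_preimage_singleton {G H : Type*} [AddGroup G] [AddGroup H]
    (f : G →+ H) (a : G) : Nat.card (f ⁻¹' {f a}) = Nat.card f.ker :=
  Nat.card_congr <| (Equiv.subRight a).subtypeEquiv fun x => by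
    simp [sub_eq_zero]

theorem AddMonoidHom.card_ker_mul_card {G H : Type*} [AddGroup G] [AddGroup H]
    (f : G →+ H) (hf : Surjective f) : Nat.card f.ker * Nat.card H = Nat.card G := by
  rw [← f.ker.card_mul_index, AddSubgroup.index_ker, f.range_eq_top.2 hf, AddSubgroup.card_top]

namespace SimpleGraph

variable {V : Type*} (G : SimpleGraph V)

theorem injective_of_pairwise_adj {ι : Type*} {f : ι → V} (hf : Pairwise (G.Adj on f)) :
    Injective f :=
  injective_iff_pairwise_ne.2 (hf.mono fun _ _ => G.ne_of_adj)

theorem isNClique_image_of_pairwise_adj [DecidableEq V] {m : ℕ} {f : Fin m → V}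
    (hf : Pairwise (G.Adj on f)) : G.IsNClique m (univ.image f) := by
  refine ⟨?_, by
    rw [card_image_of_injective _ (G.injective_of_pairwise_adj hf), card_univ, Fintype.card_fin]⟩
  simp only [coe_image, coe_univ, Set.image_univ]
  rintro _ ⟨i, rfl⟩ _ ⟨j, rfl⟩ hij
  exact hf (ne_of_apply_ne f hij)

theorem card_pairwise_adj_eq_card_isNClique_mul_factorial [Fintype V] (m : ℕ) :
    Nat.card {f : Fin m → V // Pairwise (G.Adj on f)} =
      Nat.card {s : Finset V // G.IsNClique m s} * m ! := by
  classical
  let F (f : {f : Fin m → V // Pairwise (G.Adj on f)}) : {s : Finset V // G.IsNClique m s} :=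
    ⟨univ.image f.1, G.isNClique_image_of_pairwise_adj f.2⟩
  have fiber (s : {s : Finset V // G.IsNClique m s}) : {f // F f = s} ≃ (Fin m ↪ s.1) :=
    { toFun := fun f =>
        ⟨fun i => ⟨f.1.1 i, congrArg Subtype.val f.2 ▸ mem_image_of_mem _ (mem_univ i)⟩,
          fun i j hij => G.injective_of_pairwise_adj f.1.2 (congrArg Subtype.val hij)⟩
      invFun := fun g => ⟨⟨fun i => g i, fun i j hij =>
          s.2.1 (g i).2 (g j).2 (Subtype.val_injective.ne (g.injective.ne hij))⟩, by
        have hinj : Injective fun i => (g i : V) := Subtype.val_injective.comp g.injective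
        refine Subtype.ext (eq_of_subset_of_card_le (s := univ.image fun i => (g i : V)) ?_ ?_)
        · rintro _ hx
          obtain ⟨i, -, rfl⟩ := mem_image.1 hx
          exact (g i).2
        · rw [s.2.2, card_image_of_injective _ hinj, card_univ, Fintype.card_fin]⟩
      left_inv := fun f => rfl
      right_inv := fun g => rfl }
  have card_fiber (s) : Nat.card {f // F f = s} = m ! := by
    rw [Nat.card_congr (fiber s), Nat.card_eq_fintype_card, Fintype.card_embedding_eq,
      Fintype.card_fin, Fintype.card_coe, s.2.2, Nat.descFactorial_self]
  rw [← Nat.card_congr (Equiv.sigmaFiberEquiv F), Nat.card_sigma,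
    Fintype.sum_congr _ _ card_fiber, sum_const, card_univ, smul_eq_mul, Nat.card_eq_fintype_card]

end SimpleGraph

theorem unitaryCayley_adj_iff {R : Type*} [CommRing R] [Nontrivial R] {a b : R} :
    (unitaryCayley R).Adj a b ↔ IsUnit (a - b) :=
  ⟨And.right, fun h => ⟨sub_ne_zero.1 h.ne_zero, h⟩⟩

def unitDiffTuples (ι R : Type*) [CommRing R] : Set (ι → R) :=
  {f | Pairwise fun i j => IsUnit (f i - f j)}

section UnitDiffTuples

variable {ι R R' : Type*} [CommRing R] [CommRing R']

theorem pairwise_unitaryCayley_adj_iff [Nontrivial R] {f : ι → R} :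
    Pairwise ((unitaryCayley R).Adj on f) ↔ f ∈ unitDiffTuples ι R :=
  forall₂_congr fun _ _ => imp_congr_right fun _ => unitaryCayley_adj_iff

theorem card_unitDiffTuples_congr (e : R ≃+* R') :
    Nat.card (unitDiffTuples ι R) = Nat.card (unitDiffTuples ι R') :=
  Nat.card_congr <| (Equiv.piCongrRight fun _ => e.toEquiv).subtypeEquiv fun f => by
    simp [unitDiffTuples, ← map_sub]

theorem card_unitDiffTuples_prod :
    Nat.card (unitDiffTuples ι (R × R')) =
      Nat.card (unitDiffTuples ι R) * Nat.card (unitDiffTuples ι R') := by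
  rw [← Nat.card_prod]
  refine Nat.card_congr <| ((Equiv.arrowProdEquivProdArrow _ _ _).subtypeEquiv fun f => ?_).trans
    Equiv.subtypeProdEquivProd
  simp only [unitDiffTuples, Set.mem_ofPred_eq, Prod.isUnit_iff, Prod.fst_sub, Prod.snd_sub]
  exact ⟨fun h => ⟨fun i j hij => (h hij).1, fun i j hij => (h hij).2⟩,
    fun h i j hij => ⟨h.1 hij, h.2 hij⟩⟩

theorem card_unitDiffTuples_of_residue [Fintype ι] [Finite R] {K : Type*} [CommRing K]
    (π : R →+* K) (hπ : Surjective π) (hunit : ∀ x, IsUnit x ↔ π x ≠ 0) :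
    Nat.card (unitDiffTuples ι R) =
      (Nat.card K).descFactorial (Fintype.card ι) *
        Nat.card (RingHom.ker π) ^ Fintype.card ι := by
  have : Finite K := Finite.of_surjective π hπ
  rw [← card_injective_comp_of_card_fiber π fun b => ?_]
  · refine Nat.card_congr <| Equiv.subtypeEquivRight fun f => ?_
    simp only [unitDiffTuples, Set.mem_ofPred_eq, hunit, map_sub, sub_ne_zero]
    exact injective_iff_pairwise_ne.symm
  · obtain ⟨a, rfl⟩ := hπ b
    exact π.toAddMonoidHom.card_preimage_singleton a

end UnitDiffTuples

theorem S_eq_factorization_prod (k : ℕ) {n : ℕ} (hn : n ≠ 0) :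
    S k n = n.factorization.prod fun p e => p ^ (e - 1) * (p - k) := by
  rcases eq_or_ne k 0 with rfl | hk
  · conv_lhs => rw [S, if_pos rfl, ← Nat.prod_factorization_pow_eq_self hn]
    refine Finsupp.prod_congr fun p hp => ?_
    rw [Nat.sub_zero, pow_sub_one_mul (Finsupp.mem_support_iff.1 hp)]
  · simp [S, hk, Finsupp.prod]

namespace ZMod

section PrimePow

variable {p e : ℕ} [Fact p.Prime]

theorem isUnit_iff_castHom_ne_zero_s6 (he : e ≠ 0) (x : ZMod (p ^ e)) :
    IsUnit x ↔ castHom (dvd_pow_self p he) (ZMod p) x ≠ 0 := by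
  have hp : p.Prime := Fact.out
  rw [← natCast_zmod_val x, isUnit_iff_coprime, Nat.coprime_pow_right_iff (Nat.pos_of_ne_zero he),
    Nat.coprime_comm, hp.coprime_iff_not_dvd, map_natCast, Ne, natCast_eq_zero_iff]

theorem card_ker_castHom_prime_pow (he : e ≠ 0) :
    Nat.card (RingHom.ker (castHom (dvd_pow_self p he) (ZMod p))) = p ^ (e - 1) := by
  have hp : p.Prime := Fact.out
  have := (castHom (dvd_pow_self p he) (ZMod p)).toAddMonoidHom.card_ker_mul_card
    (castHom_surjective (dvd_pow_self p he))
  rw [Nat.card_zmod, Nat.card_zmod] at this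
  exact Nat.eq_of_mul_eq_mul_right hp.pos (this.trans (pow_sub_one_mul he p).symm)

theorem card_unitDiffTuples_prime_pow (m : ℕ) (he : e ≠ 0) :
    Nat.card (unitDiffTuples (Fin m) (ZMod (p ^ e))) = p.descFactorial m * (p ^ (e - 1)) ^ m := by
  rw [card_unitDiffTuples_of_residue _ (castHom_surjective (dvd_pow_self p he))
    (isUnit_iff_castHom_ne_zero_s6 he), Nat.card_zmod, Fintype.card_fin,
    card_ker_castHom_prime_pow he]

end PrimePow

theorem card_unitDiffTuples_mul (m : ℕ) {a b : ℕ} (hab : a.Coprime b) :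
    Nat.card (unitDiffTuples (Fin m) (ZMod (a * b))) =
      Nat.card (unitDiffTuples (Fin m) (ZMod a)) * Nat.card (unitDiffTuples (Fin m) (ZMod b)) := by
  rw [card_unitDiffTuples_congr (chineseRemainder hab), card_unitDiffTuples_prod]

theorem card_unitDiffTuples_one (m : ℕ) : Nat.card (unitDiffTuples (Fin m) (ZMod 1)) = 1 := by
  rw [Nat.card_eq_one_iff_unique]
  exact ⟨inferInstance, ⟨⟨0, fun _ _ _ => isUnit_of_subsingleton _⟩⟩⟩

theorem card_unitDiffTuples (m : ℕ) {n : ℕ} (hn : n ≠ 0) :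
    Nat.card (unitDiffTuples (Fin m) (ZMod n)) = ∏ k ∈ range m, S k n := by
  rw [Nat.multiplicative_factorization (fun n => Nat.card (unitDiffTuples (Fin m) (ZMod n)))
    (fun _ _ => card_unitDiffTuples_mul m) (card_unitDiffTuples_one m) hn]
  simp_rw [S_eq_factorization_prod _ hn, Finsupp.prod]
  rw [prod_comm]
  refine prod_congr rfl fun p hp => ?_
  have : Fact p.Prime := ⟨Nat.prime_of_mem_primeFactors hp⟩
  rw [card_unitDiffTuples_prime_pow m (Finsupp.mem_support_iff.1 hp), prod_mul_distrib,
    prod_const, card_range, Nat.descFactorial_eq_prod_range, mul_comm]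

end ZMod

theorem prod_Icc_div_eq_prod_range_div_factorial {K : Type*} [Field K] [CharZero K] (f : ℕ → K)
    (m : ℕ) : ∏ k ∈ Icc 1 m, f (k - 1) / k = (∏ k ∈ range m, f k) / m ! := by
  induction m with
  | zero => simp
  | succ m ih =>
    rw [prod_Icc_succ_top (by omega), ih, prod_range_succ, Nat.factorial_succ, Nat.add_sub_cancel]
    push_cast
    field_simp

theorem card_cliques_unitaryCayley_general (m n : ℕ) (hn : 1 < n) :
    (Nat.card {s : Finset (ZMod n) // (unitaryCayley (ZMod n)).IsNClique m s} : ℚ) =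
      ∏ k ∈ Finset.Icc 1 m, (S (k - 1) n : ℚ) / k := by
  have : Fact (1 < n) := ⟨hn⟩
  have hcount : Nat.card {s : Finset (ZMod n) // (unitaryCayley (ZMod n)).IsNClique m s} * m ! =
      ∏ k ∈ range m, S k n := by
    rw [← SimpleGraph.card_pairwise_adj_eq_card_isNClique_mul_factorial,
      ← ZMod.card_unitDiffTuples m (by omega)]
    exact Nat.card_congr (Equiv.subtypeEquivRight fun _ => pairwise_unitaryCayley_adj_iff)
  rw [prod_Icc_div_eq_prod_range_div_factorial (fun k => (S k n : ℚ)), eq_div_iff (by positivity)]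
  exact_mod_cast hcount

theorem card_cliques_unitaryCayley (m n : ℕ) (hm : 0 < m) (hn : 1 < n) :
    (Nat.card {s : Finset (ZMod n) // (unitaryCayley (ZMod n)).IsNClique m s} : ℚ) =
      ∏ k ∈ Finset.Icc 1 m, (S (k - 1) n : ℚ) / k :=
  card_cliques_unitaryCayley_general m n hn
end

section
/- For any positive integers m and n with n > 1, m! divides the product ∏_{k=1}^{m} S_{k-1}(n), where S_0(n) = n and S_r is the Schemmel totient function. -/
theorem factorial_dvd_prod_schemmel (m n : ℕ) (hm : 0 < m) (hn : 1 < n) :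
    m.factorial ∣ ∏ k ∈ Finset.range m, S k n := by
  by_cases h : ∃ p ∈ n.primeFactors, p < m
  · obtain ⟨p, hp, hpm⟩ := h
    have hpp : p.Prime := Nat.prime_of_mem_primeFactors hp
    have hSp : S p n = 0 := by
      rw [S, if_neg hpp.ne_zero]
      exact Finset.prod_eq_zero hp (by simp)
    rw [Finset.prod_eq_zero (Finset.mem_range.mpr hpm) hSp]
    exact dvd_zero _
  · push_neg at h
    obtain ⟨p, hpp, hpd⟩ := Nat.exists_prime_and_dvd (Nat.ne_of_gt hn)
    have hp : p ∈ n.primeFactors :=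
      Nat.mem_primeFactors.mpr ⟨hpp, hpd, by omega⟩
    have hdvd : p.descFactorial m ∣ ∏ k ∈ Finset.range m, S k n := by
      rw [Nat.descFactorial_eq_prod_range]
      refine Finset.prod_dvd_prod_of_dvd _ _ fun k hk => ?_
      rcases Nat.eq_zero_or_pos k with rfl | hk0
      · simpa [S] using hpd
      · rw [S, if_neg hk0.ne']
        exact dvd_trans (dvd_mul_left _ _) (Finset.dvd_prod_of_mem _ hp)
    exact dvd_trans (Nat.factorial_dvd_descFactorial p m) hdvd
end

section
/- Let X be a commutative ring with unity, and let A, B, C, D ∈ X with A - B and C - D units. Then the map F : X → X defined by F(Z) = C - (A - Z)(C - D)(A - B)^{-1} is a graph automorphism of the unitary Cayley graph G_X with F(A) = C and F(B) = D. In particular G_X is a symmetric graph. -/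
section AffineUnitSlope

variable {X : Type*} [CommRing X] {f : X → X} {u : Xˣ}

theorem bijective_of_sub_eq_sub_mul_unit (hf : ∀ Y Z, f Y - f Z = (Y - Z) * u) :
    Function.Bijective f := by
  have hf_affine : f = fun Z => f 0 + Z * u :=
    funext fun Z => by linear_combination hf Z 0
  rw [hf_affine]
  exact ((Units.mulRight u).trans (Equiv.addLeft (f 0))).bijective

theorem unitaryCayley_adj_iff_of_sub_eq_sub_mul_unit (hf : ∀ Y Z, f Y - f Z = (Y - Z) * u)
    (Y Z : X) : (unitaryCayley X).Adj (f Y) (f Z) ↔ (unitaryCayley X).Adj Y Z := by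
  change f Y ≠ f Z ∧ IsUnit (f Y - f Z) ↔ Y ≠ Z ∧ IsUnit (Y - Z)
  rw [(bijective_of_sub_eq_sub_mul_unit hf).injective.ne_iff, hf, Units.isUnit_mul_units]

end AffineUnitSlope

theorem unitaryCayley_symmetric {X : Type*} [CommRing X] (A B C D : X)
    (hAB : IsUnit (A - B)) (hCD : IsUnit (C - D)) :
    Function.Bijective (fun Z => C - (A - Z) * (C - D) * Ring.inverse (A - B)) ∧
      C - (A - A) * (C - D) * Ring.inverse (A - B) = C ∧
      C - (A - B) * (C - D) * Ring.inverse (A - B) = D ∧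
      ∀ Y Z : X, (unitaryCayley X).Adj Y Z ↔
        (unitaryCayley X).Adj (C - (A - Y) * (C - D) * Ring.inverse (A - B))
          (C - (A - Z) * (C - D) * Ring.inverse (A - B)) := by
  let u : Xˣ := (hCD.mul (isUnit_ringInverse.mpr hAB)).unit
  have hF : ∀ Y Z : X, (C - (A - Y) * (C - D) * Ring.inverse (A - B)) -
      (C - (A - Z) * (C - D) * Ring.inverse (A - B)) = (Y - Z) * u := fun Y Z => by
    simp only [u, IsUnit.unit_spec]
    ring
  refine ⟨bijective_of_sub_eq_sub_mul_unit hF, by simp, ?_,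
    fun Y Z => (unitaryCayley_adj_iff_of_sub_eq_sub_mul_unit hF Y Z).symm⟩
  rw [mul_right_comm, Ring.mul_inverse_cancel _ hAB]
  ring
end

section
/- For an integer n > 1, the clique number of the unitary Cayley graph G_{ℤ/nℤ} equals the smallest prime factor p of n, and the chromatic number of G_{ℤ/nℤ} also equals p. -/
namespace SimpleGraph

variable {V : Type*} {G : SimpleGraph V} {n : ℕ} {s : Finset V}

theorem IsNClique.chromaticNumber_eq_of_colorable (hs : G.IsNClique n s) (hc : G.Colorable n) :
    G.chromaticNumber = n :=
  le_antisymm hc.chromaticNumber_le (hs.card_eq ▸ hs.isClique.card_le_chromaticNumber)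

theorem IsNClique.cliqueNum_eq_of_colorable [Finite V] (hs : G.IsNClique n s)
    (hc : G.Colorable n) : G.cliqueNum = n := by
  refine le_antisymm ?_ (hs.card_eq ▸ hs.isClique.card_le_cliqueNum)
  exact_mod_cast G.cliqueNum_le_chromaticNumber.trans hc.chromaticNumber_le

end SimpleGraph

theorem ZMod.isUnit_natCast_sub_natCast_of_lt_minFac {n a b : ℕ} (hab : b < a)
    (ha : a < n.minFac) :
    IsUnit ((a : ZMod n) - b) := by
  rw [← Nat.cast_sub hab.le, ZMod.isUnit_iff_coprime]
  exact (Nat.coprime_of_lt_minFac (by omega) (by omega)).symm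

namespace unitaryCayley

def coloringOfRingHom {R S : Type*} [CommRing R] [Ring S] [Nontrivial S] (f : R →+* S) :
    (unitaryCayley R).Coloring S :=
  SimpleGraph.Coloring.mk f fun {a b} ⟨_, hunit⟩ hfab => by
    simpa [map_sub, hfab] using (hunit.map f).ne_zero

theorem zmod_colorable_minFac {n : ℕ} (hn : n ≠ 1) :
    (unitaryCayley (ZMod n)).Colorable n.minFac := by
  have : Fact n.minFac.Prime := ⟨Nat.minFac_prime hn⟩
  simpa [ZMod.card] using (coloringOfRingHom (ZMod.castHom n.minFac_dvd (ZMod n.minFac))).colorable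

theorem zmod_isNClique_range_minFac (n : ℕ) :
    (unitaryCayley (ZMod n)).IsNClique n.minFac
      ((Finset.range n.minFac).image (Nat.cast : ℕ → ZMod n)) := by
  refine ⟨?_, ?_⟩
  · simp only [Finset.coe_image, Finset.coe_range]
    rintro _ ⟨a, ha, rfl⟩ _ ⟨b, hb, rfl⟩ hne
    refine ⟨hne, ?_⟩
    rcases lt_or_gt_of_ne (ne_of_apply_ne _ hne) with hab | hab
    · rw [← neg_sub]
      exact (ZMod.isUnit_natCast_sub_natCast_of_lt_minFac hab hb).neg
    · exact ZMod.isUnit_natCast_sub_natCast_of_lt_minFac hab ha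
  · refine (Finset.card_image_of_injOn fun a ha b hb hab => ?_).trans (Finset.card_range _)
    rw [Finset.coe_range, Set.mem_Iio] at ha hb
    rw [ZMod.natCast_eq_natCast_iff'] at hab
    rcases n.eq_zero_or_pos with rfl | hn
    · simpa using hab
    · have := Nat.minFac_le hn
      rwa [Nat.mod_eq_of_lt (by omega), Nat.mod_eq_of_lt (by omega)] at hab

end unitaryCayley

theorem unitaryCayley_cliqueNum_chromaticNumber (n : ℕ) (hn : 1 < n) :
    (unitaryCayley (ZMod n)).cliqueNum = n.minFac ∧
      (unitaryCayley (ZMod n)).chromaticNumber = (n.minFac : ℕ∞) := by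
  have : NeZero n := ⟨by omega⟩
  have hclique := unitaryCayley.zmod_isNClique_range_minFac n
  have hcol := unitaryCayley.zmod_colorable_minFac hn.ne'
  exact ⟨hclique.cliqueNum_eq_of_colorable hcol, hclique.chromaticNumber_eq_of_colorable hcol⟩
end

section
/- For an integer n > 1: if n is even, the chromatic index of the unitary Cayley graph G_{ℤ/nℤ} equals φ(n); if n is odd, it equals φ(n) + 1, where φ is Euler's totient function. -/
/-- A graph is `k`-edge-colorable if its edges can be colored with `k` colors so that
distinct edges sharing an endpoint receive different colors. -/
def EdgeColorable {V : Type*} (G : SimpleGraph V) (k : ℕ) : Prop :=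
  ∃ C : G.edgeSet → Fin k, ∀ e f : G.edgeSet, e ≠ f →
    (∃ v, v ∈ (e : Sym2 V) ∧ v ∈ (f : Sym2 V)) → C e ≠ C f

/-- The chromatic index: the least number of colors in a proper edge coloring. -/
noncomputable def chromaticIndex {V : Type*} (G : SimpleGraph V) : ℕ :=
  sInf {k | EdgeColorable G k}

/-!
Every vertex has the `φ(n)` neighbours `v - u`, `u` a unit, so at least `φ(n)` colors are needed.
For odd `n` a color class is a matching, of at most `(n - 1) / 2` of the `n φ(n) / 2` edges,
which forces one more color.

For even `n` every edge joins an even and an odd residue, and coloring `{a, b}`, `a` even, by the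
unit `b - a` is proper. For odd `n` the edges `{a, -a}` form a matching, which gets its own color;
for each unit `w`, the remaining edges of difference `±w` form a path (the cycle `a ↦ a + w` with
one edge removed), colored alternately `w` and `-w`.
-/

open Finset

namespace EdgeColorable

variable {V : Type*} {G : SimpleGraph V} {k : ℕ}

theorem exists_eq_mk_of_mem_of_mem {e f : G.edgeSet} (hef : e ≠ f) {v : V}
    (hve : v ∈ (e : Sym2 V)) (hvf : v ∈ (f : Sym2 V)) :
    ∃ x y, x ≠ y ∧ (e : Sym2 V) = s(v, x) ∧ (f : Sym2 V) = s(v, y) := by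
  obtain ⟨x, hx⟩ := Sym2.mem_iff_exists.mp hve
  obtain ⟨y, hy⟩ := Sym2.mem_iff_exists.mp hvf
  exact ⟨x, y, fun hxy => hef (Subtype.ext (by rw [hx, hy, hxy])), hx, hy⟩

theorem of_adj {α : Type*} (S : Finset α) (c : V → V → α)
    (hmem : ∀ a b, G.Adj a b → c a b ∈ S) (hsymm : ∀ a b, G.Adj a b → c a b = c b a)
    (hproper : ∀ v x y, G.Adj v x → G.Adj v y → x ≠ y → c v x ≠ c v y) :
    EdgeColorable G #S := by
  have hout : ∀ e : G.edgeSet, (e : Sym2 V) = s(e.1.out.1, e.1.out.2) := fun e =>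
    (Quot.out_eq e.1).symm
  have hcolor : ∀ (e : G.edgeSet) v x, (e : Sym2 V) = s(v, x) →
      c e.1.out.1 e.1.out.2 = c v x := by
    intro e v x he
    have hadj : G.Adj v x := G.mem_edgeSet.mp (he ▸ e.2)
    rcases Sym2.eq_iff.mp ((hout e).symm.trans he) with ⟨h1, h2⟩ | ⟨h1, h2⟩
    · rw [h1, h2]
    · rw [h1, h2, hsymm _ _ hadj]
  refine ⟨fun e => S.equivFin ⟨c e.1.out.1 e.1.out.2,
    hmem _ _ (G.mem_edgeSet.mp (hout e ▸ e.2))⟩, ?_⟩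
  rintro e f hef ⟨v, hve, hvf⟩ hc
  obtain ⟨x, y, hxy, hx, hy⟩ := exists_eq_mk_of_mem_of_mem hef hve hvf
  have hc' : c e.1.out.1 e.1.out.2 = c f.1.out.1 f.1.out.2 :=
    congrArg Subtype.val (S.equivFin.injective hc)
  rw [hcolor e v x hx, hcolor f v y hy] at hc'
  exact hproper v x y (G.mem_edgeSet.mp (hx ▸ e.2)) (G.mem_edgeSet.mp (hy ▸ f.2)) hxy hc'

theorem degree_le (h : EdgeColorable G k) (v : V) [Fintype (G.neighborSet v)] :
    G.degree v ≤ k := by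
  obtain ⟨C, hC⟩ := h
  let star : G.neighborSet v → Fin k := fun x => C ⟨s(v, x), x.2⟩
  have hinj : Function.Injective star := by
    intro x y hxy
    by_contra hne
    refine hC _ _ (fun h => hne ?_) ⟨v, Sym2.mem_mk_left _ _, Sym2.mem_mk_left _ _⟩ hxy
    exact Subtype.ext (Sym2.congr_right.mp (congrArg Subtype.val h))
  simpa [G.card_neighborSet_eq_degree] using Fintype.card_le_of_injective star hinj

theorem card_edgeFinset_le [Fintype V] [DecidableEq V] [DecidableRel G.Adj]
    (h : EdgeColorable G k) : #G.edgeFinset ≤ k * (Fintype.card V / 2) := by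
  obtain ⟨C, hC⟩ := h
  have hclass : ∀ i, 2 * #{e | C e = i} ≤ Fintype.card V := by
    intro i
    have hdisj : (({e | C e = i} : Finset G.edgeSet) : Set G.edgeSet).PairwiseDisjoint
        (fun e => (e : Sym2 V).toFinset) := by
      intro e he f hf hef
      refine Finset.disjoint_left.mpr fun v hve hvf => hC e f hef ?_ ?_
      · exact ⟨v, Sym2.mem_toFinset.mp hve, Sym2.mem_toFinset.mp hvf⟩
      · exact (mem_filter.mp he).2.trans (mem_filter.mp hf).2.symm
    calc 2 * #{e | C e = i} = ∑ e ∈ {e | C e = i}, #(e : Sym2 V).toFinset := by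
          rw [Finset.sum_congr rfl fun e _ =>
            Sym2.card_toFinset_of_not_isDiag _ (G.not_isDiag_of_mem_edgeSet e.2)]
          simp [mul_comm]
      _ = #(({e | C e = i} : Finset G.edgeSet).biUnion fun e => (e : Sym2 V).toFinset) :=
          (Finset.card_biUnion hdisj).symm
      _ ≤ Fintype.card V := Finset.card_le_univ _
  calc #G.edgeFinset = ∑ i : Fin k, #{e | C e = i} := by
        rw [SimpleGraph.edgeFinset, Set.toFinset_card, ← Finset.card_univ]
        exact Finset.card_eq_sum_card_fiberwise fun e _ => Finset.mem_univ (C e)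
    _ ≤ ∑ _i : Fin k, Fintype.card V / 2 :=
        Finset.sum_le_sum fun i _ => (Nat.le_div_iff_mul_le two_pos).mpr (by linarith [hclass i])
    _ = k * (Fintype.card V / 2) := by simp

theorem succ_le_of_isRegularOfDegree [Fintype V] [DecidableEq V] [DecidableRel G.Adj] {d : ℕ}
    (h : EdgeColorable G k) (hreg : G.IsRegularOfDegree d) (hd : 0 < d)
    (hodd : Odd (Fintype.card V)) : d + 1 ≤ k := by
  have hedges := h.card_edgeFinset_le
  have hsum := G.sum_degrees_eq_twice_card_edges
  simp only [hreg.degree_eq, Finset.sum_const, Finset.card_univ, smul_eq_mul] at hsum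
  obtain ⟨m, hm⟩ := hodd
  rw [hm, show (2 * m + 1) / 2 = m by omega] at hedges
  rw [hm] at hsum
  by_contra! hk
  have : (2 * m + 1) * d ≤ 2 * m * d :=
    calc (2 * m + 1) * d = 2 * #G.edgeFinset := hsum
      _ ≤ 2 * (k * m) := by omega
      _ ≤ 2 * (d * m) := by gcongr; omega
      _ = 2 * m * d := by ring
  rw [add_mul, one_mul] at this
  omega

end EdgeColorable

theorem chromaticIndex_eq {V : Type*} {G : SimpleGraph V} {k : ℕ} (h : EdgeColorable G k)
    (hmin : ∀ j, EdgeColorable G j → k ≤ j) : chromaticIndex G = k :=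
  IsLeast.csInf_eq ⟨h, hmin⟩

section UnitaryCayley

variable {X : Type*} [CommRing X]

theorem unitaryCayley_adj [Nontrivial X] {a b : X} :
    (unitaryCayley X).Adj a b ↔ IsUnit (a - b) :=
  ⟨And.right, fun h => ⟨fun hab => not_isUnit_zero (by rwa [hab, sub_self] at h), h⟩⟩

theorem unitaryCayley_isRegularOfDegree [Fintype X] [DecidableEq X] [Nontrivial X]
    [DecidableRel (unitaryCayley X).Adj] :
    (unitaryCayley X).IsRegularOfDegree (Fintype.card Xˣ) := by
  intro v
  let e : (unitaryCayley X).neighborSet v ≃ Xˣ :=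
    { toFun x := x.2.2.unit
      invFun u := ⟨v - u, unitaryCayley_adj.mpr (by simp)⟩
      left_inv x := Subtype.ext (by simp)
      right_inv u := Units.ext (by simp) }
  rw [← SimpleGraph.card_neighborSet_eq_degree, Fintype.card_congr e]

theorem unitaryCayley_edgeColorable_of_ringHom [Fintype X] [DecidableEq X]
    (χ : X →+* ZMod 2) : EdgeColorable (unitaryCayley X) (Fintype.card Xˣ) := by
  have hfibre : ∀ a b : X, IsUnit (a - b) → (χ a = 0 ↔ χ b ≠ 0) := by
    intro a b hab
    have hχ : χ a - χ b ≠ 0 := by simpa using (hab.map χ).ne_zero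
    generalize χ a = p at hχ ⊢
    generalize χ b = q at hχ ⊢
    revert p q; decide
  let S : Finset X := univ.map ⟨Units.val, Units.val_injective⟩
  have hS : #S = Fintype.card Xˣ := by simp [S]
  rw [← hS]
  refine EdgeColorable.of_adj S (fun a b => if χ a = 0 then b - a else a - b) ?_ ?_ ?_
  · intro a b hab
    have hba : IsUnit (b - a) := by simpa using hab.2.neg
    simp only [S, Finset.mem_map, Finset.mem_univ, true_and]
    split_ifs
    exacts [hba, hab.2]
  · intro a b hab
    have := hfibre a b hab.2
    split_ifs <;> tauto
  · intro v x y hx hy hxy hc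
    split_ifs at hc
    · exact hxy (by linear_combination hc)
    · exact hxy (by linear_combination -hc)

end UnitaryCayley

namespace ZMod

variable {n : ℕ}

theorem inv_neg_of_isUnit {u : ZMod n} (hu : IsUnit u) : (-u)⁻¹ = -u⁻¹ := by
  obtain ⟨w, rfl⟩ := hu
  rw [← Units.val_neg, inv_coe_unit, inv_coe_unit, inv_neg, Units.val_neg]

theorem isUnit_two_of_odd (hn : Odd n) : IsUnit (2 : ZMod n) := by
  simpa using (isUnit_iff_coprime 2 n).mpr hn.coprime_two_left

/-- `(a + b) / (2 (b - a))`: the edges of difference `±w` form the cycle `a ↦ a + w`, along which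
this is the position of the edge `{a, a + w}`, advancing by `1` per step. -/
def midDivDiff (a b : ZMod n) : ZMod n := (a + b) * (2 * (b - a))⁻¹

variable {a b : ZMod n}

theorem midDivDiff_mul (h : IsUnit (2 * (b - a))) : midDivDiff a b * (2 * (b - a)) = a + b := by
  rw [midDivDiff, mul_assoc, mul_comm _ (2 * (b - a)), mul_inv_of_unit _ h, mul_one]

theorem midDivDiff_eq_zero_iff (h : IsUnit (2 * (b - a))) : midDivDiff a b = 0 ↔ a + b = 0 := by
  rw [← midDivDiff_mul h]
  exact h.mul_left_eq_zero.symm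

theorem midDivDiff_swap (h : IsUnit (2 * (b - a))) : midDivDiff b a = -midDivDiff a b := by
  rw [midDivDiff, midDivDiff, show 2 * (a - b) = -(2 * (b - a)) by ring, inv_neg_of_isUnit h,
    add_comm]
  ring

theorem midDivDiff_add_midDivDiff_reflect (h : IsUnit (2 * (b - a))) :
    midDivDiff a b + midDivDiff a (2 * a - b) = 1 := by
  rw [midDivDiff, midDivDiff, show 2 * (2 * a - b - a) = -(2 * (b - a)) by ring,
    inv_neg_of_isUnit h, ← mul_inv_of_unit _ h]
  ring

variable [NeZero n]

theorem odd_val_neg_iff (hn : Odd n) {q : ZMod n} (hq : q ≠ 0) :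
    Odd (-q).val ↔ ¬Odd q.val := by
  have hval : q.val ≠ 0 := (val_ne_zero q).mpr hq
  have hlt := q.val_lt
  rw [neg_val, if_neg hq, Nat.odd_iff, Nat.odd_iff]
  rw [Nat.odd_iff] at hn
  omega

theorem odd_val_one_sub_iff (hn : Odd n) {q : ZMod n} (h0 : q ≠ 0) (h1 : q ≠ 1) :
    Odd (1 - q).val ↔ Odd q.val := by
  have : Fact (1 < n) := ⟨by
    by_contra! h
    obtain rfl : n = 1 := by have := NeZero.pos n; omega
    exact h0 (Subsingleton.elim _ _)⟩
  have hval : 1 ≤ q.val := Nat.one_le_iff_ne_zero.mpr ((val_ne_zero q).mpr h0)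
  rw [← neg_sub, odd_val_neg_iff hn (sub_ne_zero.mpr h1), val_sub (by rwa [val_one]), val_one,
    Nat.odd_sub hval]
  simp

/-- Two edges at `v` of opposite orientation sit at the reflected positions `q` and `1 - q`. -/
theorem odd_val_midDivDiff_reflect_iff (hn : Odd n) {v x : ZMod n} (hu : IsUnit (2 * (x - v)))
    (hvx : v + x ≠ 0) (hvy : v + (2 * v - x) ≠ 0) :
    Odd (midDivDiff v x).val ↔ Odd (midDivDiff v (2 * v - x)).val := by
  have hrefl := midDivDiff_add_midDivDiff_reflect hu
  rw [eq_sub_of_add_eq' hrefl, odd_val_one_sub_iff hn]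
  · rwa [Ne, midDivDiff_eq_zero_iff hu]
  · intro h1
    have hu' : IsUnit (2 * (2 * v - x - v)) := by
      rw [show 2 * (2 * v - x - v) = -(2 * (x - v)) by ring]
      exact hu.neg
    rw [h1, add_eq_left, midDivDiff_eq_zero_iff hu'] at hrefl
    exact hvy hrefl

end ZMod

section OddModulus

open ZMod

def oddCayleyEdgeColor {n : ℕ} (a b : ZMod n) : Option (ZMod n) :=
  if a + b = 0 then none else some (if Odd (midDivDiff a b).val then b - a else a - b)

theorem unitaryCayley_zmod_edgeColorable_of_odd {n : ℕ} (hn : Odd n) :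
    EdgeColorable (unitaryCayley (ZMod n)) (n.totient + 1) := by
  have : NeZero n := ⟨hn.pos.ne'⟩
  have h2 := isUnit_two_of_odd hn
  let S : Finset (ZMod n) := univ.map ⟨Units.val, Units.val_injective⟩
  have hS : #S.insertNone = n.totient + 1 := by simp [S, card_units_eq_totient]
  rw [← hS]
  refine EdgeColorable.of_adj S.insertNone oddCayleyEdgeColor ?_ ?_ ?_
  · intro a b hab
    have hba : IsUnit (b - a) := by simpa using hab.2.neg
    unfold oddCayleyEdgeColor
    split_ifs
    · exact none_mem_insertNone
    · exact some_mem_insertNone.mpr (mem_map.mpr ⟨hba.unit, mem_univ _, hba.unit_spec⟩)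
    · exact some_mem_insertNone.mpr (mem_map.mpr ⟨hab.2.unit, mem_univ _, hab.2.unit_spec⟩)
  · intro a b hab
    have hba : IsUnit (2 * (b - a)) := h2.mul (by simpa using hab.2.neg)
    have hswap : midDivDiff a b ≠ 0 → (Odd (midDivDiff b a).val ↔ ¬Odd (midDivDiff a b).val) :=
      fun h => midDivDiff_swap hba ▸ odd_val_neg_iff hn h
    unfold oddCayleyEdgeColor
    rw [add_comm b a]
    split_ifs with hsum <;> simp_all [midDivDiff_eq_zero_iff hba]
  · intro v x y hx hy hxy hc
    have hparity : v + x ≠ 0 → v + y ≠ 0 → x - v = v - y →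
        (Odd (midDivDiff v x).val ↔ Odd (midDivDiff v y).val) := by
      intro hvx hvy hxy
      obtain rfl : y = 2 * v - x := by linear_combination hxy
      exact odd_val_midDivDiff_reflect_iff hn (h2.mul (by simpa using hx.2.neg)) hvx hvy
    unfold oddCayleyEdgeColor at hc
    by_cases hvx : v + x = 0 <;> by_cases hvy : v + y = 0 <;>
      simp only [hvx, hvy, if_true, if_false, reduceCtorEq, Option.some.injEq] at hc
    · exact hxy (by linear_combination hvx - hvy)
    by_cases hox : Odd (midDivDiff v x).val <;> by_cases hoy : Odd (midDivDiff v y).val <;>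
      simp only [hox, hoy, if_true, if_false] at hc
    · exact hxy (by linear_combination hc)
    · exact hoy ((hparity hvx hvy (by linear_combination hc)).mp hox)
    · exact hox ((hparity hvx hvy (by linear_combination -hc)).mpr hoy)
    · exact hxy (by linear_combination -hc)

end OddModulus

theorem unitaryCayley_chromaticIndex (n : ℕ) (hn : 1 < n) :
    chromaticIndex (unitaryCayley (ZMod n)) =
      if Even n then n.totient else n.totient + 1 := by
  have : NeZero n := ⟨by omega⟩
  have : Fact (1 < n) := ⟨hn⟩
  classical
  have hreg := unitaryCayley_isRegularOfDegree (X := ZMod n)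
  rw [ZMod.card_units_eq_totient] at hreg
  split_ifs with heven
  · have hcol := unitaryCayley_edgeColorable_of_ringHom (ZMod.castHom heven.two_dvd (ZMod 2))
    rw [ZMod.card_units_eq_totient] at hcol
    exact chromaticIndex_eq hcol fun k hk => hreg.degree_eq 0 ▸ hk.degree_le 0
  · have hodd : Odd n := Nat.not_even_iff_odd.mp heven
    refine chromaticIndex_eq (unitaryCayley_zmod_edgeColorable_of_odd hodd) fun k hk =>
      hk.succ_le_of_isRegularOfDegree hreg (Nat.totient_pos.mpr (by omega)) ?_
    rwa [ZMod.card]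
end

section
/- Let n > 1 be an integer that is not prime, and let λ(n) be the number of distinct prime factors of n. If the smallest prime factor of n is greater than λ(n), then every clique of order λ(n) + 1 in G_{ℤ/nℤ} is a dominating set of G_{ℤ/nℤ}, and no clique of order at most λ(n) dominates G_{ℤ/nℤ}. Hence the clique domination number of G_{ℤ/nℤ} is λ(n) + 1. -/
/-- A set of vertices dominates a graph if every vertex is in the set or
adjacent to a member of the set. -/
def Dominates {V : Type*} (G : SimpleGraph V) (s : Finset V) : Prop :=
  ∀ v, v ∈ s ∨ ∃ w ∈ s, G.Adj v w

/-! The nonunits of `ZMod n` are exactly the elements of the ideals `(p)` for the `λ(n)` prime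
factors `p` of `n`, and these ideals are pairwise coprime. So `v` is non-adjacent to `w` iff
`v ≡ w` modulo one of them: a clique with more than `λ(n)` members cannot have a vertex outside
it non-adjacent to all of them (pigeonhole), while for a clique with at most `λ(n)` members the
Chinese remainder theorem produces such a vertex. -/

section CommRing

variable {R : Type*} [CommRing R]

theorem not_dominates_unitaryCayley_of_forall_not_isUnit_sub {s : Finset R} {v : R}
    (hv : v ∉ s) (h : ∀ w ∈ s, ¬IsUnit (v - w)) : ¬Dominates (unitaryCayley R) s :=
  fun hdom => match hdom v with
  | .inl hvs => hv hvs
  | .inr ⟨w, hw, hadj⟩ => h w hw hadj.2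

/-- For `v` outside `s` and adjacent to none of its members, pigeonhole gives `a ≠ b` in `s` with
`v - a` and `v - b` in one ideal of `t`, which then contains the unit `b - a`. -/
theorem dominates_unitaryCayley_of_card_lt {t : Finset (Ideal R)} (ht : ∀ I ∈ t, I ≠ ⊤)
    (hcover : ∀ x : R, ¬IsUnit x → ∃ I ∈ t, x ∈ I) {s : Finset R}
    (hs : (unitaryCayley R).IsClique (s : Set R)) (hcard : t.card < s.card) :
    Dominates (unitaryCayley R) s := by
  intro v
  by_cases hv : v ∈ s
  · exact .inl hv
  refine .inr (by_contra fun hno => ?_)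
  have hnu : ∀ w ∈ s, ¬IsUnit (v - w) := fun w hw hu =>
    hno ⟨w, hw, fun h => hv (h ▸ hw), hu⟩
  choose! I hIt hmem using fun w (hw : w ∈ s) => hcover _ (hnu w hw)
  obtain ⟨a, ha, b, hb, hab, hI⟩ := Finset.exists_ne_map_eq_of_card_lt_of_maps_to hcard hIt
  have hba : b - a ∈ I a := by
    rw [show b - a = (v - a) - (v - b) by ring]
    exact sub_mem (hmem a ha) (hI ▸ hmem b hb)
  exact ht _ (hIt a ha) (Ideal.eq_top_of_isUnit_mem _ hba (hs hb ha hab.symm).2)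

theorem not_dominates_unitaryCayley_singleton {x : R} (hx0 : x ≠ 0) (hx : ¬IsUnit x) (a : R) :
    ¬Dominates (unitaryCayley R) {a} := by
  refine not_dominates_unitaryCayley_of_forall_not_isUnit_sub (v := a + x) ?_ ?_
  · simpa using hx0
  · simpa using hx

/-- The vertex `v` with `v ≡ w` modulo `J w` for all `w ∈ s` is not in `s`, since it would then
be adjacent to the other members of `s`. -/
theorem not_dominates_unitaryCayley_of_pairwise_isCoprime {s : Finset R}
    (hs : (unitaryCayley R).IsClique (s : Set R)) (hs1 : s.card ≠ 1) {J : R → Ideal R}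
    (hJ : ∀ w ∈ s, J w ≠ ⊤) (hcop : (s : Set R).Pairwise (Function.onFun IsCoprime J)) :
    ¬Dominates (unitaryCayley R) s := by
  obtain ⟨v, hv⟩ := Ideal.exists_forall_sub_mem_ideal (I := fun w : s => J w)
    (fun w₁ w₂ hne => hcop w₁.2 w₂.2 (Subtype.coe_ne_coe.mpr hne)) (↑)
  have hnu : ∀ w ∈ s, ¬IsUnit (v - w) := fun w hw hu =>
    hJ w hw (Ideal.eq_top_of_isUnit_mem _ (hv ⟨w, hw⟩) hu)
  refine not_dominates_unitaryCayley_of_forall_not_isUnit_sub (fun hvs => ?_) hnu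
  have hs2 : 1 < s.card := by
    have := Finset.card_pos.mpr ⟨v, hvs⟩
    omega
  obtain ⟨w, hw, hwv⟩ := Finset.exists_mem_ne hs2 v
  exact hnu w hw (hs hvs hw hwv.symm).2

end CommRing

namespace ZMod

variable {n : ℕ}

theorem exists_mem_primeFactors_natCast_dvd_of_not_isUnit [NeZero n] {x : ZMod n}
    (hx : ¬IsUnit x) : ∃ p ∈ n.primeFactors, (p : ZMod n) ∣ x := by
  have hco : ¬x.val.Coprime n := fun hc => hx (by simpa using (isUnit_iff_coprime x.val n).mpr hc)
  obtain ⟨p, hp, hpd⟩ := Nat.exists_prime_and_dvd hco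
  refine ⟨p, Nat.mem_primeFactors.mpr ⟨hp, hpd.trans (Nat.gcd_dvd_right _ _), NeZero.ne n⟩,
    ?_⟩
  simpa using Nat.cast_dvd_cast (α := ZMod n) (hpd.trans (Nat.gcd_dvd_left _ _))

theorem span_natCast_ne_top_of_mem_primeFactors {p : ℕ} (hp : p ∈ n.primeFactors) :
    Ideal.span {(p : ZMod n)} ≠ ⊤ := by
  rw [Ne, Ideal.span_singleton_eq_top, isUnit_prime_iff_not_dvd (Nat.prime_of_mem_primeFactors hp)]
  exact not_not.mpr (Nat.dvd_of_mem_primeFactors hp)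

theorem isCoprime_span_natCast_of_ne {p q : ℕ} (hp : p.Prime) (hq : q.Prime) (hpq : p ≠ q) :
    IsCoprime (Ideal.span {(p : ZMod n)}) (Ideal.span {(q : ZMod n)}) := by
  rw [Ideal.isCoprime_span_singleton_iff]
  simpa only [map_natCast] using
    (Nat.Coprime.isCoprime ((Nat.coprime_primes hp hq).mpr hpq)).map (Int.castRingHom (ZMod n))

theorem exists_ne_zero_not_isUnit (hn : 1 < n) (hnp : ¬n.Prime) :
    ∃ x : ZMod n, x ≠ 0 ∧ ¬IsUnit x := by
  have hlt := (Nat.not_prime_iff_minFac_lt hn).mp hnp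
  refine ⟨n.minFac, fun h => ?_, ?_⟩
  · have := Nat.le_of_dvd (Nat.minFac_pos n) ((natCast_eq_zero_iff _ _).mp h)
    omega
  · rw [isUnit_prime_iff_not_dvd (Nat.minFac_prime (by omega)), not_not]
    exact Nat.minFac_dvd n

end ZMod

theorem unitaryCayley_clique_domination_general (n : ℕ) (hn : 1 < n) (hnp : ¬ n.Prime) :
    (∀ s : Finset (ZMod n),
        (unitaryCayley (ZMod n)).IsNClique (n.primeFactors.card + 1) s →
        Dominates (unitaryCayley (ZMod n)) s) ∧
      ∀ (m : ℕ), m ≤ n.primeFactors.card → ∀ s : Finset (ZMod n),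
        (unitaryCayley (ZMod n)).IsNClique m s →
        ¬ Dominates (unitaryCayley (ZMod n)) s := by
  have : NeZero n := ⟨by omega⟩
  let I : ℕ → Ideal (ZMod n) := fun p => Ideal.span {(p : ZMod n)}
  constructor
  · intro s hs
    refine dominates_unitaryCayley_of_card_lt (t := n.primeFactors.image I) ?_ ?_ hs.isClique ?_
    · exact Finset.forall_mem_image.mpr fun p hp => ZMod.span_natCast_ne_top_of_mem_primeFactors hp
    · intro x hx
      obtain ⟨p, hp, hpx⟩ := ZMod.exists_mem_primeFactors_natCast_dvd_of_not_isUnit hx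
      exact ⟨I p, Finset.mem_image_of_mem I hp, Ideal.mem_span_singleton.mpr hpx⟩
    · exact Finset.card_image_le.trans_lt (hs.card_eq ▸ Nat.lt_succ_self _)
  · intro m hm s hs
    by_cases hs1 : s.card = 1
    · obtain ⟨a, rfl⟩ := Finset.card_eq_one.mp hs1
      obtain ⟨x, hx0, hx⟩ := ZMod.exists_ne_zero_not_isUnit hn hnp
      exact not_dominates_unitaryCayley_singleton hx0 hx a
    obtain ⟨f, hf, hinj⟩ := (s : Set (ZMod n)).toFinite.exists_injOn_of_encard_le
      (t := (n.primeFactors : Set ℕ))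
      (by simpa [Set.encard_coe_eq_coe_finsetCard] using hs.card_eq ▸ hm)
    refine not_dominates_unitaryCayley_of_pairwise_isCoprime hs.isClique hs1 (J := I ∘ f)
      (fun w hw => ZMod.span_natCast_ne_top_of_mem_primeFactors (hf hw))
      fun w₁ h₁ w₂ h₂ hne => ZMod.isCoprime_span_natCast_of_ne
        (Nat.prime_of_mem_primeFactors (hf h₁)) (Nat.prime_of_mem_primeFactors (hf h₂))
        fun h => hne (hinj h₁ h₂ h)

theorem unitaryCayley_clique_domination (n : ℕ) (hn : 1 < n) (hnp : ¬ n.Prime)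
    (h : n.primeFactors.card < n.minFac) :
    (∀ s : Finset (ZMod n),
        (unitaryCayley (ZMod n)).IsNClique (n.primeFactors.card + 1) s →
        Dominates (unitaryCayley (ZMod n)) s) ∧
      ∀ (m : ℕ), m ≤ n.primeFactors.card → ∀ s : Finset (ZMod n),
        (unitaryCayley (ZMod n)).IsNClique m s →
        ¬ Dominates (unitaryCayley (ZMod n)) s :=
  unitaryCayley_clique_domination_general n hn hnp
end

section
/- Let n > 1 be an odd integer that is not prime. Then the unitary Cayley graph G_{ℤ/nℤ} has diameter 2: it is not complete, and any two distinct vertices have a common neighbor. -/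
/-- Vámos's terminology: such rings are called *2-good*. -/
def IsTwoGood (R : Type*) [Ring R] : Prop :=
  ∀ x : R, ∃ u v : R, IsUnit u ∧ IsUnit v ∧ u + v = x

namespace IsTwoGood

variable {R S : Type*} [Ring R] [Ring S]

theorem of_surjective {F : Type*} [FunLike F R S] [RingHomClass F R S] (f : F) [IsLocalHom f]
    (hf : Function.Surjective f) (hS : IsTwoGood S) : IsTwoGood R := by
  intro x
  obtain ⟨u', v', hu', hv', huv'⟩ := hS (f x)
  obtain ⟨u, rfl⟩ := hf u'
  refine ⟨u, x - u, hu'.of_map, ?_, add_sub_cancel u x⟩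
  refine IsUnit.of_map f _ ?_
  rwa [map_sub, ← huv', add_sub_cancel_left]

theorem of_ringEquiv (e : R ≃+* S) (hS : IsTwoGood S) : IsTwoGood R :=
  of_surjective e e.surjective hS

theorem prod (hR : IsTwoGood R) (hS : IsTwoGood S) : IsTwoGood (R × S) := by
  rintro ⟨x, y⟩
  obtain ⟨u₁, v₁, hu₁, hv₁, rfl⟩ := hR x
  obtain ⟨u₂, v₂, hu₂, hv₂, rfl⟩ := hS y
  exact ⟨(u₁, u₂), (v₁, v₂), Prod.isUnit_iff.2 ⟨hu₁, hu₂⟩, Prod.isUnit_iff.2 ⟨hv₁, hv₂⟩, rfl⟩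

theorem of_two_lt_card {K : Type*} [DivisionRing K] [Fintype K] (hK : 2 < Fintype.card K) :
    IsTwoGood K := by
  classical
  intro x
  obtain ⟨w, -, hw⟩ := Finset.exists_mem_notMem_of_card_lt_card
    ((Finset.card_le_two (a := 0) (b := x)).trans_lt (hK.trans_eq Finset.card_univ.symm))
  simp only [Finset.mem_insert, Finset.mem_singleton, not_or] at hw
  exact ⟨w, x - w, isUnit_iff_ne_zero.2 hw.1, isUnit_iff_ne_zero.2 (sub_ne_zero.2 (Ne.symm hw.2)),
    add_sub_cancel w x⟩

end IsTwoGood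

theorem ZMod.isLocalHom_castHom_pow (p : ℕ) {k : ℕ} (hk : k ≠ 0) :
    IsLocalHom (ZMod.castHom (dvd_pow_self p hk) (ZMod p)) := by
  refine ⟨fun x hx => ?_⟩
  obtain ⟨m, rfl⟩ := ZMod.intCast_surjective x
  rw [map_intCast, ZMod.coe_int_isUnit_iff_isCoprime] at hx
  rw [ZMod.coe_int_isUnit_iff_isCoprime, Nat.cast_pow]
  exact hx.pow_left

theorem ZMod.isTwoGood_of_odd {n : ℕ} (hn : Odd n) : IsTwoGood (ZMod n) := by
  induction n using Nat.recOnPosPrimePosCoprime with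
  | prime_pow p k hp hk =>
    have : Fact p.Prime := ⟨hp⟩
    have := ZMod.isLocalHom_castHom_pow p hk.ne'
    have hp2 : 2 < p := by
      obtain ⟨r, rfl⟩ := (Nat.odd_pow_iff hk.ne').1 hn
      have := hp.two_le
      omega
    exact IsTwoGood.of_surjective _ (ZMod.castHom_surjective _)
      (IsTwoGood.of_two_lt_card (K := ZMod p) (by rwa [ZMod.card]))
  | zero => exact absurd hn (by decide)
  | one => exact fun x => ⟨0, 0, isUnit_of_subsingleton 0, isUnit_of_subsingleton 0,
      Subsingleton.elim _ _⟩
  | coprime a b _ _ hab iha ihb =>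
    exact IsTwoGood.of_ringEquiv (ZMod.chineseRemainder hab)
      ((iha (Nat.Odd.of_mul_left hn)).prod (ihb (Nat.Odd.of_mul_right hn)))

theorem unitaryCayley_exists_common_adj {R : Type*} [CommRing R] [Nontrivial R]
    (hR : IsTwoGood R) (a b : R) :
    ∃ c, (unitaryCayley R).Adj a c ∧ (unitaryCayley R).Adj c b := by
  obtain ⟨u, v, hu, hv, huv⟩ := hR (a - b)
  have hac : a - (a - u) = u := sub_sub_cancel a u
  have hcb : a - u - b = v := by linear_combination -huv
  refine ⟨a - u, ⟨?_, by rwa [hac]⟩, ⟨?_, by rwa [hcb]⟩⟩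
  · exact fun h => hu.ne_zero (by rw [← hac, ← h, sub_self])
  · exact fun h => hv.ne_zero (by rw [← hcb, h, sub_self])

theorem ZMod.unitaryCayley_not_adj_natCast_zero {m n : ℕ} (hm : m ∣ n) (hm1 : m ≠ 1) :
    ¬ (unitaryCayley (ZMod n)).Adj m 0 := by
  rintro ⟨-, hu⟩
  rw [sub_zero, ZMod.isUnit_iff_coprime] at hu
  exact hm1 (Nat.Coprime.eq_one_of_dvd hu hm)

theorem unitaryCayley_diameter_two (n : ℕ) (hn : 1 < n) (hodd : Odd n)
    (hnp : ¬ n.Prime) :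
    (∃ a b : ZMod n, a ≠ b ∧ ¬ (unitaryCayley (ZMod n)).Adj a b) ∧
      ∀ a b : ZMod n, a ≠ b →
        ∃ c, (unitaryCayley (ZMod n)).Adj a c ∧ (unitaryCayley (ZMod n)).Adj c b := by
  have : Fact (1 < n) := ⟨hn⟩
  refine ⟨?_, fun a b _ => unitaryCayley_exists_common_adj (ZMod.isTwoGood_of_odd hodd) a b⟩
  obtain ⟨m, hmn, hm2, hmlt⟩ := Nat.exists_dvd_of_not_prime2 hn hnp
  refine ⟨m, 0, ?_, ZMod.unitaryCayley_not_adj_natCast_zero hmn (by omega)⟩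
  rw [Ne, ZMod.natCast_eq_zero_iff]
  exact fun h => absurd (Nat.le_of_dvd (by omega) h) (by omega)
end
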